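/- Let X be a nonnegative random variable with X^θ long-tailed for some 0 < θ ≤ 1, and let g : [0,∞) → [0,∞) satisfy limsup_{x→∞} g(x)/x < 1. Then for every ε > 0 there exists x̆_ε > 0 such that for all x > x̆_ε and all 0 ≤ u ≤ g(x): P(X > x − u) ≤ P(X > x) · e^{ε(u^θ + 1)}. -/

import Mathlib

open MeasureTheory Filter Set ProbabilityTheory Real

/-- The tail probability `P(X > x)` as a real number. -/
noncomputable def tailP {Ω : Type*} [MeasurableSpace Ω] (μ : Measure Ω) (X : Ω → ℝ) (x : ℝ) : ℝ :=
  (μ {ω | x < X ω}).toReal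

/-- A nonnegative random variable `X` is long-tailed if `P(X > x) > 0` for all `x ≥ 0` and
`P(X > x + y) / P(X > x) → 1` as `x → ∞` for all `y > 0`. -/
def LongTailed {Ω : Type*} [MeasurableSpace Ω] (μ : Measure Ω) (X : Ω → ℝ) : Prop :=
  (∀ x ≥ 0, 0 < tailP μ X x) ∧
  ∀ y > 0, Tendsto (fun x => tailP μ X (x + y) / tailP μ X x) atTop (nhds 1)

/-!
Writing `Y = X^θ`, long-tailedness gives `P(Y > t) ≤ e^δ P(Y > t + 1)` for large `t`, and iterating
this step `⌈v⌉` times gives `P(Y > s) ≤ e^{δ(v+1)} P(Y > s + v)` for all large `s`. In particular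
`P(Y > t)` decays slower than any exponential. Since `x^θ ≤ (x - u)^θ + u^θ`, the event
`{X > x - u}` is contained in `{Y > x^θ - u^θ}`; when `x^θ - u^θ` is large the iterated step bound
applies with `v = u^θ`, and otherwise `u^θ` is comparable to `x^θ`, so that the subexponential lower
bound on `P(Y > x^θ)` absorbs the trivial bound `P(X > x - u) ≤ 1`.
-/

section TailProbability

variable {Ω : Type*} [MeasurableSpace Ω] (μ : Measure Ω)

lemma tailP_nonneg (X : Ω → ℝ) (x : ℝ) : 0 ≤ tailP μ X x := ENNReal.toReal_nonneg

lemma tailP_antitone [IsFiniteMeasure μ] (X : Ω → ℝ) : Antitone (tailP μ X) :=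
  fun _ _ hab => ENNReal.toReal_mono (measure_ne_top μ _)
    (measure_mono fun _ h => lt_of_le_of_lt hab h)

lemma tailP_le_one [IsProbabilityMeasure μ] (X : Ω → ℝ) (x : ℝ) : tailP μ X x ≤ 1 :=
  ENNReal.toReal_le_of_le_ofReal zero_le_one (prob_le_one.trans ENNReal.ofReal_one.ge)

variable {X : Ω → ℝ} (hX : ∀ ω, 0 ≤ X ω) {θ : ℝ} (hθ : 0 < θ)
include hX hθ

lemma tailP_eq_tailP_rpow {x : ℝ} (hx : 0 ≤ x) :
    tailP μ X x = tailP μ (fun ω => X ω ^ θ) (x ^ θ) := by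
  simp only [tailP, rpow_lt_rpow_iff hx (hX _) hθ]

lemma tailP_sub_le_tailP_rpow_sub [IsFiniteMeasure μ] (hθ1 : θ ≤ 1) {x u : ℝ} (hx : 0 ≤ x)
    (hu : 0 ≤ u) : tailP μ X (x - u) ≤ tailP μ (fun ω => X ω ^ θ) (x ^ θ - u ^ θ) := by
  refine ENNReal.toReal_mono (measure_ne_top μ _) (measure_mono fun ω hω => ?_)
  have hlt : x < X ω + u := by linarith [show x - u < X ω from hω]
  calc x ^ θ - u ^ θ < (X ω + u) ^ θ - u ^ θ := by gcongr
    _ ≤ X ω ^ θ := by linarith [rpow_add_le_add_rpow (hX ω) hu hθ.le hθ1]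

end TailProbability

section Iteration

variable {f : ℝ → ℝ} {δ T : ℝ}

lemma le_exp_mul_nat_mul_add_of_le_exp_mul_add_one (hstep : ∀ t ≥ T, f t ≤ exp δ * f (t + 1))
    (n : ℕ) {s : ℝ} (hs : T ≤ s) : f s ≤ exp (δ * n) * f (s + n) := by
  induction n generalizing s with
  | zero => simp
  | succ n ih =>
    calc f s ≤ exp δ * f (s + 1) := hstep s hs
      _ ≤ exp δ * (exp (δ * n) * f (s + 1 + n)) := by gcongr; exact ih (by linarith)
      _ = exp (δ * ↑(n + 1)) * f (s + ↑(n + 1)) := by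
        rw [← mul_assoc, ← exp_add]; push_cast; ring_nf

lemma le_exp_mul_add_one_mul_add_of_le_exp_mul_add_one (hstep : ∀ t ≥ T, f t ≤ exp δ * f (t + 1))
    (hf : 0 ≤ f) (hanti : Antitone f) (hδ : 0 ≤ δ) {s v : ℝ} (hs : T ≤ s) (hv : 0 ≤ v) :
    f s ≤ exp (δ * (v + 1)) * f (s + v) := by
  have hceil : (⌈v⌉₊ : ℝ) ≤ v + 1 := (Nat.ceil_lt_add_one hv).le
  calc f s ≤ exp (δ * ⌈v⌉₊) * f (s + ⌈v⌉₊) :=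
        le_exp_mul_nat_mul_add_of_le_exp_mul_add_one hstep _ hs
    _ ≤ exp (δ * (v + 1)) * f (s + v) := by
      gcongr
      · exact hf _
      · exact hanti (by linarith [Nat.le_ceil v])

end Iteration

namespace LongTailed

variable {Ω : Type*} [MeasurableSpace Ω] {μ : Measure Ω} {Y : Ω → ℝ}

lemma eventually_tailP_le_exp_mul_tailP_add_one (hY : LongTailed μ Y) {δ : ℝ} (hδ : 0 < δ) :
    ∀ᶠ t in atTop, tailP μ Y t ≤ exp δ * tailP μ Y (t + 1) := by
  have hratio : ∀ᶠ t in atTop, exp (-δ) < tailP μ Y (t + 1) / tailP μ Y t :=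
    (hY.2 1 one_pos).eventually (eventually_gt_nhds (exp_lt_one_iff.2 (neg_lt_zero.2 hδ)))
  filter_upwards [hratio, eventually_ge_atTop 0] with t ht ht0
  rw [lt_div_iff₀ (hY.1 t ht0), exp_neg, inv_mul_lt_iff₀ (exp_pos δ)] at ht
  exact ht.le

lemma exists_tailP_le_exp_mul_tailP_add [IsFiniteMeasure μ] (hY : LongTailed μ Y) {δ : ℝ}
    (hδ : 0 < δ) : ∃ T ≥ 0, ∀ s ≥ T, ∀ v ≥ 0,
      tailP μ Y s ≤ exp (δ * (v + 1)) * tailP μ Y (s + v) := by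
  obtain ⟨T, hT⟩ := eventually_atTop.1 (hY.eventually_tailP_le_exp_mul_tailP_add_one hδ)
  refine ⟨max T 0, le_max_right _ _, fun s hs v hv => ?_⟩
  exact le_exp_mul_add_one_mul_add_of_le_exp_mul_add_one (fun t ht => hT t (le_of_max_le_left ht))
    (tailP_nonneg μ Y) (tailP_antitone μ Y) hδ.le hs hv

lemma eventually_exp_neg_mul_le_tailP [IsFiniteMeasure μ] (hY : LongTailed μ Y) {δ : ℝ}
    (hδ : 0 < δ) : ∀ᶠ t in atTop, exp (-(δ * t)) ≤ tailP μ Y t := by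
  obtain ⟨T, hT0, hT⟩ := hY.exists_tailP_le_exp_mul_tailP_add (half_pos hδ)
  have hpT : 0 < tailP μ Y T := hY.1 T hT0
  -- the second threshold solves `-δ t ≤ log P(Y > T) - δ/2 (t - T + 1)` for `t`
  filter_upwards [eventually_ge_atTop T, eventually_ge_atTop (1 - T - 2 / δ * log (tailP μ Y T))]
    with t hTt ht
  have hchain := hT T le_rfl (t - T) (sub_nonneg.2 hTt)
  rw [add_sub_cancel] at hchain
  have hexp : exp (-(δ * t)) * exp (δ / 2 * (t - T + 1)) ≤ tailP μ Y T := by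
    rw [← exp_add, ← exp_log hpT, exp_le_exp]
    have hlog : δ / 2 * (2 / δ * log (tailP μ Y T)) = log (tailP μ Y T) := by field_simp
    nlinarith [mul_le_mul_of_nonneg_left ht (half_pos hδ).le]
  calc exp (-(δ * t)) ≤ tailP μ Y T / exp (δ / 2 * (t - T + 1)) := by
        rw [le_div_iff₀ (exp_pos _)]; exact hexp
    _ ≤ tailP μ Y t := by rw [div_le_iff₀ (exp_pos _), mul_comm]; exact hchain

lemma eventually_tailP_sub_le [IsProbabilityMeasure μ] (hY : LongTailed μ Y) {ε : ℝ}
    (hε : 0 < ε) : ∀ᶠ t in atTop, ∀ w ≥ 0,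
      tailP μ Y (t - w) ≤ tailP μ Y t * exp (ε * (w + 1)) := by
  obtain ⟨T, hT0, hT⟩ := hY.exists_tailP_le_exp_mul_tailP_add hε
  filter_upwards [hY.eventually_exp_neg_mul_le_tailP (half_pos hε), eventually_ge_atTop (2 * T)]
    with t hlow ht w hw
  by_cases hTw : T ≤ t - w
  · simpa only [sub_add_cancel, mul_comm] using hT (t - w) hTw w hw
  · calc tailP μ Y (t - w) ≤ 1 := tailP_le_one μ Y _
      _ = exp (-(ε / 2 * t)) * exp (ε / 2 * t) := by rw [← exp_add]; simp
      _ ≤ tailP μ Y t * exp (ε * (w + 1)) :=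
        mul_le_mul hlow (exp_le_exp.2 (by nlinarith)) (exp_pos _).le (tailP_nonneg μ Y t)

end LongTailed

theorem stmt5_general {Ω : Type*} [MeasurableSpace Ω] (μ : Measure Ω) [IsProbabilityMeasure μ]
    (X : Ω → ℝ) (hX : ∀ ω, 0 ≤ X ω) (θ : ℝ) (hθ0 : 0 < θ) (hθ1 : θ ≤ 1)
    (hL : LongTailed μ (fun ω => X ω ^ θ))
    (g : ℝ → ℝ) :
    ∀ ε > 0, ∃ x₀ > (0 : ℝ), ∀ x > x₀, ∀ u, 0 ≤ u → u ≤ g x →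
      tailP μ X (x - u) ≤ tailP μ X x * Real.exp (ε * (u ^ θ + 1)) := by
  intro ε hε
  obtain ⟨x₀, hx₀⟩ :=
    eventually_atTop.1 ((tendsto_rpow_atTop hθ0).eventually (hL.eventually_tailP_sub_le hε))
  refine ⟨max x₀ 1, by positivity, fun x hx u hu _ => ?_⟩
  have hx0 : 0 ≤ x := by linarith [le_max_right x₀ 1]
  calc tailP μ X (x - u) ≤ tailP μ (fun ω => X ω ^ θ) (x ^ θ - u ^ θ) :=
        tailP_sub_le_tailP_rpow_sub μ hX hθ0 hθ1 hx0 hu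
    _ ≤ tailP μ (fun ω => X ω ^ θ) (x ^ θ) * exp (ε * (u ^ θ + 1)) :=
        hx₀ x (le_of_max_le_left hx.le) _ (rpow_nonneg hu θ)
    _ = tailP μ X x * exp (ε * (u ^ θ + 1)) := by rw [tailP_eq_tailP_rpow μ hX hθ0 hx0]

/-- If `X^θ` is long-tailed for some `0 < θ ≤ 1` and `g ≥ 0` satisfies
`limsup_{x→∞} g(x)/x < 1`, then for any `ε > 0` there is `x̆_ε > 0` such that
`P(X > x - u) ≤ P(X > x) e^{ε(u^θ + 1)}` for all `x > x̆_ε` and `0 ≤ u ≤ g(x)`. -/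
theorem stmt5 {Ω : Type*} [MeasurableSpace Ω] (μ : Measure Ω) [IsProbabilityMeasure μ]
    (X : Ω → ℝ) (hX : ∀ ω, 0 ≤ X ω) (θ : ℝ) (hθ0 : 0 < θ) (hθ1 : θ ≤ 1)
    (hL : LongTailed μ (fun ω => X ω ^ θ))
    (g : ℝ → ℝ) (hg0 : ∀ x, 0 ≤ g x)
    (hg : Filter.limsup (fun x => g x / x) atTop < 1) :
    ∀ ε > 0, ∃ x₀ > (0 : ℝ), ∀ x > x₀, ∀ u, 0 ≤ u → u ≤ g x →
      tailP μ X (x - u) ≤ tailP μ X x * Real.exp (ε * (u ^ θ + 1)) :=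
  stmt5_general μ X hX θ hθ0 hθ1 hL g
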